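/- arXiv:1412.7351 — 2 statements merged into one kernel-verified Lean document; each statement's English description precedes it below -/
import Mathlib

section
/- Let E be a real Banach space and β the De Blasi measure of weak noncompactness. Suppose E₁ and E₂ are bounded nonempty subsets of E with sup{‖x‖ : x ∈ E₁} < 1. Then β(E₁ + E₂) ≤ β(E₂) + ‖E₁‖·β(K(E₂,1)), where ‖E₁‖ = sup{‖x‖ : x ∈ E₁} and K(E₂,1) = {x ∈ E : dist(x, E₂) ≤ 1}. -/
/-!
If `‖x‖ ≤ r` on `E₁` with `0 < r < 1`, then `x + y = (1 - r) • y + r • (y + r⁻¹ • x)` and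
`y + r⁻¹ • x` lies within distance `1` of `E₂`, so `E₁ + E₂ ⊆ (1 - r) • E₂ + r • K(E₂, 1)`.
Since `β` is monotone, subadditive and positively homogeneous, this gives
`β(E₁ + E₂) ≤ (1 - r) β(E₂) + r β(K(E₂, 1))`.
-/

open Metric Set Pointwise

/-- Weakly compact subset of a normed space: compact in the weak topology. -/
def IsWeaklyCompact {E : Type*} [NormedAddCommGroup E] [NormedSpace ℝ E] (C : Set E) : Prop :=
  IsCompact (toWeakSpace ℝ E '' C)

/-- De Blasi measure of weak noncompactness. -/
noncomputable def deBlasi {E : Type*} [NormedAddCommGroup E] [NormedSpace ℝ E]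
    (A : Set E) : ℝ :=
  sInf {t : ℝ | 0 < t ∧ ∃ C : Set E, IsWeaklyCompact C ∧
    A ⊆ C + t • Metric.closedBall (0 : E) 1}

open Bornology

section DeBlasi

variable {E : Type*} [NormedAddCommGroup E] [NormedSpace ℝ E]

def deBlasiRadii (A : Set E) : Set ℝ :=
  {t : ℝ | 0 < t ∧ ∃ C : Set E, IsWeaklyCompact C ∧ A ⊆ C + t • closedBall (0 : E) 1}

lemma deBlasi_eq_sInf_deBlasiRadii (A : Set E) : deBlasi A = sInf (deBlasiRadii A) := rfl

lemma bddBelow_deBlasiRadii (A : Set E) : BddBelow (deBlasiRadii A) :=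
  ⟨0, fun _ ht => ht.1.le⟩

lemma deBlasi_nonneg (A : Set E) : 0 ≤ deBlasi A :=
  Real.sInf_nonneg fun _ ht => ht.1.le

lemma deBlasi_le {A : Set E} {t : ℝ} (ht : t ∈ deBlasiRadii A) : deBlasi A ≤ t :=
  csInf_le (bddBelow_deBlasiRadii A) ht

lemma isWeaklyCompact_singleton (x : E) : IsWeaklyCompact ({x} : Set E) := by
  simp only [IsWeaklyCompact, image_singleton, isCompact_singleton]

lemma IsWeaklyCompact.add {C D : Set E} (hC : IsWeaklyCompact C) (hD : IsWeaklyCompact D) :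
    IsWeaklyCompact (C + D) := by
  rw [IsWeaklyCompact, image_add]
  exact IsCompact.add hC hD

lemma IsWeaklyCompact.smul {C : Set E} (hC : IsWeaklyCompact C) (c : ℝ) :
    IsWeaklyCompact (c • C) := by
  rw [IsWeaklyCompact, image_smul_set]
  exact IsCompact.smul c hC

lemma deBlasiRadii_nonempty {A : Set E} (hA : IsBounded A) : (deBlasiRadii A).Nonempty := by
  obtain ⟨R, hR⟩ := (isBounded_iff_forall_norm_le).mp hA
  have hR₁ : 0 < max R 1 := lt_max_of_lt_right one_pos
  refine ⟨max R 1, hR₁, {0}, isWeaklyCompact_singleton 0, fun x hx => ?_⟩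
  simp only [singleton_add, zero_add, image_id', smul_unitClosedBall_of_nonneg hR₁.le,
    mem_closedBall_zero_iff]
  exact (hR x hx).trans (le_max_left R 1)

lemma deBlasiRadii_anti {A B : Set E} (h : A ⊆ B) : deBlasiRadii B ⊆ deBlasiRadii A :=
  fun _ ⟨ht, C, hC, hB⟩ => ⟨ht, C, hC, h.trans hB⟩

lemma add_mem_deBlasiRadii {A B : Set E} {t s : ℝ} (ht : t ∈ deBlasiRadii A)
    (hs : s ∈ deBlasiRadii B) : t + s ∈ deBlasiRadii (A + B) := by
  obtain ⟨ht, C, hC, hA⟩ := ht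
  obtain ⟨hs, D, hD, hB⟩ := hs
  refine ⟨add_pos ht hs, C + D, hC.add hD, ?_⟩
  rw [(convex_closedBall (0 : E) 1).add_smul ht.le hs.le, add_add_add_comm]
  exact add_subset_add hA hB

lemma smul_mem_deBlasiRadii {A : Set E} {c t : ℝ} (hc : 0 < c) (ht : t ∈ deBlasiRadii A) :
    c * t ∈ deBlasiRadii (c • A) := by
  obtain ⟨ht, C, hC, hA⟩ := ht
  refine ⟨mul_pos hc ht, c • C, hC.smul c, ?_⟩
  rw [mul_smul, ← smul_add]
  exact smul_set_mono hA

lemma deBlasi_mono {A B : Set E} (hB : IsBounded B) (h : A ⊆ B) : deBlasi A ≤ deBlasi B :=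
  csInf_le_csInf (bddBelow_deBlasiRadii A) (deBlasiRadii_nonempty hB) (deBlasiRadii_anti h)

lemma deBlasi_add_le {A B : Set E} (hA : IsBounded A) (hB : IsBounded B) :
    deBlasi (A + B) ≤ deBlasi A + deBlasi B := by
  refine le_of_forall_pos_lt_add fun ε hε => ?_
  obtain ⟨t, ht, htε⟩ := Real.lt_sInf_add_pos (deBlasiRadii_nonempty hA) (half_pos hε)
  obtain ⟨s, hs, hsε⟩ := Real.lt_sInf_add_pos (deBlasiRadii_nonempty hB) (half_pos hε)
  calc deBlasi (A + B) ≤ t + s := deBlasi_le (add_mem_deBlasiRadii ht hs)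
    _ < deBlasi A + deBlasi B + ε := by
      rw [deBlasi_eq_sInf_deBlasiRadii, deBlasi_eq_sInf_deBlasiRadii]
      linarith

lemma deBlasi_smul_le {A : Set E} (hA : IsBounded A) {c : ℝ} (hc : 0 < c) :
    deBlasi (c • A) ≤ c * deBlasi A := by
  rw [deBlasi_eq_sInf_deBlasiRadii, deBlasi_eq_sInf_deBlasiRadii, ← smul_eq_mul,
    ← Real.sInf_smul_of_nonneg hc.le]
  refine csInf_le_csInf (bddBelow_deBlasiRadii _) ((deBlasiRadii_nonempty hA).smul_set) ?_
  rintro _ ⟨t, ht, rfl⟩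
  exact smul_mem_deBlasiRadii hc ht

lemma add_subset_smul_add_smul_setOf_infDist_le_one {E₁ E₂ : Set E} {r : ℝ} (hr : 0 < r) (hE₁ : E₁ ⊆ closedBall 0 r) :
    E₁ + E₂ ⊆ (1 - r) • E₂ + r • {x : E | infDist x E₂ ≤ 1} := by
  rintro _ ⟨x, hx, y, hy, rfl⟩
  have hK : y + r⁻¹ • x ∈ {x : E | infDist x E₂ ≤ 1} := by
    calc infDist (y + r⁻¹ • x) E₂ ≤ dist (y + r⁻¹ • x) y := infDist_le_dist_of_mem hy
      _ = r⁻¹ * ‖x‖ := by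
        rw [dist_eq_norm, add_sub_cancel_left, norm_smul, Real.norm_of_nonneg (inv_pos.2 hr).le]
      _ ≤ r⁻¹ * r := by gcongr; exact mem_closedBall_zero_iff.1 (hE₁ hx)
      _ = 1 := inv_mul_cancel₀ hr.ne'
  refine ⟨(1 - r) • y, smul_mem_smul_set hy, r • (y + r⁻¹ • x), smul_mem_smul_set hK, ?_⟩
  rw [smul_add, smul_inv_smul₀ hr.ne']
  module

end DeBlasi

theorem deBlasi_add_small_general {E : Type*} [NormedAddCommGroup E] [NormedSpace ℝ E]
    (E₁ E₂ : Set E)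
    (h1b : Bornology.IsBounded E₁)
    (h2 : E₂.Nonempty) (h2b : Bornology.IsBounded E₂)
    (hsmall : sSup ((fun x => ‖x‖) '' E₁) < 1) :
    deBlasi (E₁ + E₂) ≤
      deBlasi E₂ + sSup ((fun x => ‖x‖) '' E₁) *
        deBlasi {x : E | Metric.infDist x E₂ ≤ 1} := by
  set r := sSup ((fun x => ‖x‖) '' E₁)
  set K := {x : E | infDist x E₂ ≤ 1}
  obtain ⟨R, hR⟩ := isBounded_iff_forall_norm_le.1 h1b
  have hE₁ : E₁ ⊆ closedBall 0 r := fun x hx =>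
    mem_closedBall_zero_iff.2 (le_csSup ⟨R, forall_mem_image.2 hR⟩ (mem_image_of_mem _ hx))
  have hKb : IsBounded K := h2b.thickening.subset fun x hx =>
    (mem_thickening_iff_infDist_lt h2).2 (hx.trans_lt one_lt_two)
  have hr₀ : 0 ≤ r := Real.sSup_nonneg (by simp)
  rcases hr₀.eq_or_lt with hr | hr
  · have hsub : E₁ + E₂ ⊆ E₂ := by
      rw [← hr, closedBall_zero, subset_singleton_iff_eq] at hE₁
      rcases hE₁ with h | h <;> simp [h]
    rw [← hr, zero_mul, add_zero]
    exact deBlasi_mono h2b hsub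
  calc deBlasi (E₁ + E₂) ≤ deBlasi ((1 - r) • E₂ + r • K) :=
        deBlasi_mono ((h2b.smul₀ _).add (hKb.smul₀ _))
          (add_subset_smul_add_smul_setOf_infDist_le_one hr hE₁)
    _ ≤ (1 - r) * deBlasi E₂ + r * deBlasi K :=
        (deBlasi_add_le (h2b.smul₀ _) (hKb.smul₀ _)).trans
          (add_le_add (deBlasi_smul_le h2b (sub_pos.2 hsmall)) (deBlasi_smul_le hKb hr))
    _ ≤ deBlasi E₂ + r * deBlasi K := by nlinarith [deBlasi_nonneg E₂]

theorem deBlasi_add_small {E : Type*} [NormedAddCommGroup E] [NormedSpace ℝ E]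
    [CompleteSpace E] (E₁ E₂ : Set E)
    (h1 : E₁.Nonempty) (h1b : Bornology.IsBounded E₁)
    (h2 : E₂.Nonempty) (h2b : Bornology.IsBounded E₂)
    (hsmall : sSup ((fun x => ‖x‖) '' E₁) < 1) :
    deBlasi (E₁ + E₂) ≤
      deBlasi E₂ + sSup ((fun x => ‖x‖) '' E₁) *
        deBlasi {x : E | Metric.infDist x E₂ ≤ 1} :=
  deBlasi_add_small_general E₁ E₂ h1b h2 h2b hsmall
end

section
/- Let E be a real Banach space, T₁ = [0,a], T₂ = [0,b], and let f : T₁ × T₂ × E → E be continuous. If z : T₁ × T₂ → E is continuous and satisfies z(x,y) = ∫₀ˣ ∫₀ʸ f(s,t,z(s,t)) dt ds for all (x,y), then z(x,0) = 0 for all x ∈ T₁, z(0,y) = 0 for all y ∈ T₂, the mixed partial derivative ∂²z/∂x∂y exists everywhere on (0,a) × (0,b), and ∂²z/∂x∂y (x,y) = f(x,y,z(x,y)). -/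
/-!
Clamping both variables to the rectangle turns the integrand `f s t (z s t)` into a continuous
function on the whole plane that agrees with it on the rectangle. For such an integrand the double
integral is differentiated variable by variable with the fundamental theorem of calculus, the inner
integral being continuous in the outer variable.
-/

open Set intervalIntegral

theorem ContinuousOn.exists_continuous_eqOn_Icc_prod_Icc {α β γ : Type*}
    [LinearOrder α] [TopologicalSpace α] [OrderTopology α]
    [LinearOrder β] [TopologicalSpace β] [OrderTopology β] [TopologicalSpace γ]
    {a₁ b₁ : α} {a₂ b₂ : β} (h₁ : a₁ ≤ b₁) (h₂ : a₂ ≤ b₂) {g : α × β → γ}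
    (hg : ContinuousOn g (Icc a₁ b₁ ×ˢ Icc a₂ b₂)) :
    ∃ G : α × β → γ, Continuous G ∧ EqOn G g (Icc a₁ b₁ ×ˢ Icc a₂ b₂) := by
  refine ⟨fun p => g ((projIcc a₁ b₁ h₁ p.1 : α), (projIcc a₂ b₂ h₂ p.2 : β)), ?_, ?_⟩
  · refine hg.comp_continuous ?_ fun p => ⟨(projIcc a₁ b₁ h₁ p.1).2, (projIcc a₂ b₂ h₂ p.2).2⟩
    exact (continuous_subtype_val.comp (continuous_projIcc.comp continuous_fst)).prodMk
      (continuous_subtype_val.comp (continuous_projIcc.comp continuous_snd))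
  · rintro ⟨s, t⟩ ⟨hs, ht⟩
    simp only [projIcc_of_mem h₁ hs, projIcc_of_mem h₂ ht]

section DoubleIntegral

variable {E : Type*} [NormedAddCommGroup E] [NormedSpace ℝ E]

theorem integral_integral_congr_of_eqOn_prod {G g : ℝ × ℝ → E} {S T : Set ℝ}
    (hGg : EqOn G g (S ×ˢ T)) {a₀ b₀ x y : ℝ} (hx : uIcc a₀ x ⊆ S) (hy : uIcc b₀ y ⊆ T) :
    ∫ s in a₀..x, ∫ t in b₀..y, G (s, t) = ∫ s in a₀..x, ∫ t in b₀..y, g (s, t) :=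
  integral_congr fun _ hs => integral_congr fun _ ht => hGg ⟨hx hs, hy ht⟩

variable [CompleteSpace E] {G : ℝ × ℝ → E}

theorem Continuous.hasDerivAt_integral_integral_left (hG : Continuous G) (a₀ b₀ x y : ℝ) :
    HasDerivAt (fun x' => ∫ s in a₀..x', ∫ t in b₀..y, G (s, t)) (∫ t in b₀..y, G (x, t)) x :=
  have hinner : Continuous fun s => ∫ t in b₀..y, G (s, t) :=
    continuous_parametric_intervalIntegral_of_continuous (f := fun s t => G (s, t)) hG
      continuous_const
  (hinner.integral_hasStrictDerivAt a₀ x).hasDerivAt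

theorem Continuous.hasDerivAt_integral_right (hG : Continuous G) (b₀ x y : ℝ) :
    HasDerivAt (fun y' => ∫ t in b₀..y', G (x, t)) (G (x, y)) y :=
  ((hG.comp (Continuous.prodMk_right x)).integral_hasStrictDerivAt b₀ y).hasDerivAt

end DoubleIntegral

/-- Converse direction: a continuous solution of the integral equation
solves the Goursat problem `z_{xy} = f(x,y,z)`, `z(x,0)=z(0,y)=0`. -/
theorem integral_to_goursat {E : Type*} [NormedAddCommGroup E] [NormedSpace ℝ E]
    [CompleteSpace E] (a b : ℝ) (ha : 0 < a) (hb : 0 < b)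
    (f : ℝ → ℝ → E → E)
    (hf : ContinuousOn (fun p : ℝ × ℝ × E => f p.1 p.2.1 p.2.2)
      (Set.Icc 0 a ×ˢ Set.Icc 0 b ×ˢ Set.univ))
    (z : ℝ → ℝ → E)
    (hz : ContinuousOn (fun p : ℝ × ℝ => z p.1 p.2) (Set.Icc 0 a ×ˢ Set.Icc 0 b))
    (hint : ∀ x ∈ Set.Icc (0:ℝ) a, ∀ y ∈ Set.Icc (0:ℝ) b,
      z x y = ∫ s in (0:ℝ)..x, ∫ t in (0:ℝ)..y, f s t (z s t)) :
    (∀ x ∈ Set.Icc (0:ℝ) a, z x 0 = 0) ∧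
    (∀ y ∈ Set.Icc (0:ℝ) b, z 0 y = 0) ∧
    ∃ zx : ℝ → ℝ → E,
      (∀ x ∈ Set.Ioo (0:ℝ) a, ∀ y ∈ Set.Ioo (0:ℝ) b,
        HasDerivAt (fun x' => z x' y) (zx x y) x) ∧
      (∀ x ∈ Set.Ioo (0:ℝ) a, ∀ y ∈ Set.Ioo (0:ℝ) b,
        HasDerivAt (fun y' => zx x y') (f x y (z x y)) y) := by
  have hcont : ContinuousOn (fun p : ℝ × ℝ => f p.1 p.2 (z p.1 p.2)) (Icc 0 a ×ˢ Icc 0 b) :=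
    hf.comp (continuousOn_fst.prodMk (continuousOn_snd.prodMk hz)) fun _ hp => ⟨hp.1, hp.2, trivial⟩
  obtain ⟨G, hG, hGf⟩ := hcont.exists_continuous_eqOn_Icc_prod_Icc ha.le hb.le
  refine ⟨fun x hx => by simp [hint x hx 0 ⟨le_rfl, hb.le⟩],
    fun y hy => by simp [hint 0 ⟨le_rfl, ha.le⟩ y hy],
    fun x y => ∫ t in (0:ℝ)..y, G (x, t), ?_, ?_⟩
  · intro x hx y hy
    refine (hG.hasDerivAt_integral_integral_left 0 0 x y).congr_of_eventuallyEq ?_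
    filter_upwards [Ioo_mem_nhds hx.1 hx.2] with x' hx'
    rw [hint x' (Ioo_subset_Icc_self hx') y (Ioo_subset_Icc_self hy)]
    exact (integral_integral_congr_of_eqOn_prod hGf
      (uIcc_subset_Icc (left_mem_Icc.2 ha.le) (Ioo_subset_Icc_self hx'))
      (uIcc_subset_Icc (left_mem_Icc.2 hb.le) (Ioo_subset_Icc_self hy))).symm
  · intro x hx y hy
    have hGxy : G (x, y) = f x y (z x y) := hGf ⟨Ioo_subset_Icc_self hx, Ioo_subset_Icc_self hy⟩
    exact hGxy ▸ hG.hasDerivAt_integral_right 0 x y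
end
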